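/- In the root system D₃⁽²⁾, the subset B = {β₀, β₁, β₀+β₁, 2β₀+β₁, β₀+β₁+2β₂} of the order ideal I = {β₀, β₁, β₂, β₀+β₁, β₁+β₂, 2β₀+β₁, β₁+2β₂, 2β₀+β₁+β₂, β₀+β₁+2β₂} is biclosed in I but not separable in I. -/

import Mathlib

open Set

variable {V : Type*} [AddCommGroup V] [Module ℝ V]

/-- The set of nonnegative linear combinations of elements of `A`. -/
def posSpan (A : Set V) : Set V :=
  {v | ∃ (s : Finset V) (c : V → ℝ),
    (↑s : Set V) ⊆ A ∧ (∀ x ∈ s, 0 ≤ c x) ∧ v = ∑ x ∈ s, c x • x}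

/-- The nonnegative span of the pair `α, β`. -/
def cone2 (α β : V) : Set V := {v | ∃ a b : ℝ, 0 ≤ a ∧ 0 ≤ b ∧ v = a • α + b • β}

/-- `B` is closed in `X`. -/
def IsClosedIn (X B : Set V) : Prop :=
  B ⊆ X ∧ ∀ α ∈ B, ∀ β ∈ B, ∀ γ ∈ X, γ ∈ cone2 α β → γ ∈ B

/-- `B` is coclosed in `X`. -/
def IsCoclosedIn (X B : Set V) : Prop := B ⊆ X ∧ IsClosedIn X (X \ B)

/-- `B` is biclosed in `X`. -/
def IsBiclosedIn (X B : Set V) : Prop := IsClosedIn X B ∧ IsClosedIn X (X \ B)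

/-- `B` is convex in `X`. -/
def IsConvexIn (X B : Set V) : Prop := B ⊆ X ∧ posSpan B ∩ X = B

/-- `B` is biconvex in `X`. -/
def IsBiconvexIn (X B : Set V) : Prop := IsConvexIn X B ∧ IsConvexIn X (X \ B)

/-- `B` is weakly separable in `X`. -/
def WeaklySeparableIn (X B : Set V) : Prop :=
  B ⊆ X ∧ posSpan B ∩ posSpan (X \ B) = {0}

/-- `B` is separable in `X`. -/
def SeparableIn (X B : Set V) : Prop :=
  B ⊆ X ∧ ∃ θ : Module.Dual ℝ V, (∀ α ∈ B, θ α < 0) ∧ (∀ α ∈ X \ B, 0 < θ α)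

/-- `X` is clean: every biclosed subset is weakly separable. -/
def IsCleanIn (X : Set V) : Prop := ∀ B : Set V, IsBiclosedIn X B → WeaklySeparableIn X B

/-- The closure of `U` in `X`: the smallest closed subset of `X` containing `U`. -/
def closureIn (X U : Set V) : Set V := ⋂₀ {C | U ⊆ C ∧ IsClosedIn X C}

/-- The interior of `K` in `X`. -/
def interiorIn (X K : Set V) : Set V := X \ closureIn X (X \ K)

/-- `F` is a full subset of `X`. -/
def IsFullIn (X F : Set V) : Prop :=
  F ⊆ X ∧ ∀ α ∈ F, ∀ β ∈ F, X ∩ (Submodule.span ℝ {α, β} : Set V) ⊆ F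

/-- The simple roots `β₀, β₁, β₂` of `D₃⁽²⁾`, modeled as linearly independent vectors
(the standard basis of `ℝ³`; biclosedness and separability only depend on the linear
structure). -/
noncomputable def bD (i : Fin 3) : Fin 3 → ℝ := Pi.single i 1

/-- The order ideal `I` of nine roots in `D₃⁽²⁾`. -/
noncomputable def ID3 : Set (Fin 3 → ℝ) :=
  {bD 0, bD 1, bD 2, bD 0 + bD 1, bD 1 + bD 2, (2 : ℝ) • bD 0 + bD 1,
    bD 1 + (2 : ℝ) • bD 2, (2 : ℝ) • bD 0 + bD 1 + bD 2, bD 0 + bD 1 + (2 : ℝ) • bD 2}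

/-- The subset `B` of `I`. -/
noncomputable def BD3 : Set (Fin 3 → ℝ) :=
  {bD 0, bD 1, bD 0 + bD 1, (2 : ℝ) • bD 0 + bD 1, bD 0 + bD 1 + (2 : ℝ) • bD 2}

/-! In the coordinates of `β₀, β₁, β₂`, a root `γ` lies in the cone of `α, β` exactly when a
linear system in the two cone coefficients is solvable; for every `α, β` on one side of `B` and
`γ` on the other side the system is inconsistent, which is biclosedness. A functional negative
on `B` and positive on `I \ B` cannot exist because of the relation
`β₀ + (β₀ + β₁ + 2β₂) = (2β₀ + β₁ + β₂) + β₂` between two roots of `B` and two of `I \ B`. -/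

theorem isBiclosedIn_of_notMem_cone2 {X B : Set V} (hBX : B ⊆ X)
    (hB : ∀ α ∈ B, ∀ β ∈ B, ∀ γ ∈ X \ B, γ ∉ cone2 α β)
    (hC : ∀ α ∈ X \ B, ∀ β ∈ X \ B, ∀ γ ∈ B, γ ∉ cone2 α β) :
    IsBiclosedIn X B := by
  refine ⟨⟨hBX, fun α hα β hβ γ hγ hcone => ?_⟩, ⟨sdiff_subset, fun α hα β hβ γ hγ hcone => ?_⟩⟩
  · by_contra hγB
    exact hB α hα β hβ γ ⟨hγ, hγB⟩ hcone
  · exact ⟨hγ, fun hγB => hC α hα β hβ γ hγB hcone⟩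

theorem not_separableIn_of_add_eq_add {X B : Set V} {α₁ α₂ γ₁ γ₂ : V}
    (hα₁ : α₁ ∈ B) (hα₂ : α₂ ∈ B) (hγ₁ : γ₁ ∈ X \ B) (hγ₂ : γ₂ ∈ X \ B)
    (h : α₁ + α₂ = γ₁ + γ₂) : ¬ SeparableIn X B := by
  rintro ⟨-, θ, hθB, hθC⟩
  have hθ := congrArg θ h
  rw [map_add, map_add] at hθ
  linarith [hθB α₁ hα₁, hθB α₂ hα₂, hθC γ₁ hγ₁, hθC γ₂ hγ₂]

theorem vec3_mem_cone2_iff (x₀ x₁ x₂ u₀ u₁ u₂ v₀ v₁ v₂ : ℝ) :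
    ![x₀, x₁, x₂] ∈ cone2 ![u₀, u₁, u₂] ![v₀, v₁, v₂] ↔
      ∃ a b : ℝ, 0 ≤ a ∧ 0 ≤ b ∧
        x₀ = a * u₀ + b * v₀ ∧ x₁ = a * u₁ + b * v₁ ∧ x₂ = a * u₂ + b * v₂ := by
  simp [cone2, ← List.ofFn_inj]

theorem bD_zero : bD 0 = ![1, 0, 0] := by
  ext i; fin_cases i <;> simp [bD]

theorem bD_one : bD 1 = ![0, 1, 0] := by
  ext i; fin_cases i <;> simp [bD]

theorem bD_two : bD 2 = ![0, 0, 1] := by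
  ext i; fin_cases i <;> simp [bD]

theorem ID3_eq : ID3 = {![1, 0, 0], ![0, 1, 0], ![0, 0, 1], ![1, 1, 0], ![0, 1, 1],
    ![2, 1, 0], ![0, 1, 2], ![2, 1, 1], ![1, 1, 2]} := by
  norm_num [ID3, bD_zero, bD_one, bD_two]

theorem BD3_eq : BD3 = {![1, 0, 0], ![0, 1, 0], ![1, 1, 0], ![2, 1, 0], ![1, 1, 2]} := by
  norm_num [BD3, bD_zero, bD_one, bD_two]

theorem ID3_diff_BD3 : ID3 \ BD3 = {![0, 0, 1], ![0, 1, 1], ![0, 1, 2], ![2, 1, 1]} := by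
  rw [ID3_eq, BD3_eq]
  ext v
  simp only [mem_sdiff, mem_insert_iff, mem_singleton_iff]
  constructor
  · rintro ⟨hv, hvB⟩
    rcases hv with rfl | rfl | rfl | rfl | rfl | rfl | rfl | rfl | rfl <;> simp_all
  · rintro (rfl | rfl | rfl | rfl) <;> norm_num

theorem BD3_notMem_cone2 : ∀ α ∈ BD3, ∀ β ∈ BD3, ∀ γ ∈ ID3 \ BD3, γ ∉ cone2 α β := by
  rw [ID3_diff_BD3, BD3_eq]
  simp only [mem_insert_iff, mem_singleton_iff]
  rintro α (rfl | rfl | rfl | rfl | rfl) β (rfl | rfl | rfl | rfl | rfl) γ (rfl | rfl | rfl | rfl) <;>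
    rw [vec3_mem_cone2_iff] <;> rintro ⟨a, b, ha, hb, h₀, h₁, h₂⟩ <;> linarith

theorem ID3_diff_BD3_notMem_cone2 :
    ∀ α ∈ ID3 \ BD3, ∀ β ∈ ID3 \ BD3, ∀ γ ∈ BD3, γ ∉ cone2 α β := by
  rw [ID3_diff_BD3, BD3_eq]
  simp only [mem_insert_iff, mem_singleton_iff]
  rintro α (rfl | rfl | rfl | rfl) β (rfl | rfl | rfl | rfl) γ (rfl | rfl | rfl | rfl | rfl) <;>
    rw [vec3_mem_cone2_iff] <;> rintro ⟨a, b, ha, hb, h₀, h₁, h₂⟩ <;> linarith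

theorem BD3_subset_ID3 : BD3 ⊆ ID3 := by
  rw [BD3_eq, ID3_eq]
  simp [insert_subset_iff]

/-- In `D₃⁽²⁾`, the set `B` is biclosed in the order ideal `I` but not
separable in `I`. -/
theorem D3_twisted_biclosed_not_separable :
    IsBiclosedIn ID3 BD3 ∧ ¬ SeparableIn ID3 BD3 := by
  refine ⟨isBiclosedIn_of_notMem_cone2 BD3_subset_ID3 BD3_notMem_cone2
    ID3_diff_BD3_notMem_cone2, ?_⟩
  apply not_separableIn_of_add_eq_add (α₁ := ![1, 0, 0]) (α₂ := ![1, 1, 2])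
    (γ₁ := ![2, 1, 1]) (γ₂ := ![0, 0, 1])
  · simp [BD3_eq]
  · simp [BD3_eq]
  · simp [ID3_diff_BD3]
  · simp [ID3_diff_BD3]
  · norm_num
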